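/- Let a be a nonzero complex number and let λ ∈ 𝒯 (a formal power series in X with constant term 1), and let c₁ denote the coefficient of X in λ. Then there exists μ ∈ 𝕄 such that τ_a(μ)·μ^{−1} = λ (under the identification of the degree-zero subgroup of 𝕄 with 𝒯) if and only if c₁/a ∈ ℤ. In that case the solution μ is unique, and deg μ = c₁/a. -/

import Mathlib

/-!
Solvability of the formal additive difference equation `τ_a(μ)·μ⁻¹ = λ` in the group `𝕄`
of monic formal Laurent series (Lemma `L:factorization` of the paper).
-/

open PowerSeries

noncomputable section

/-- Integer powers of a power series over `ℂ` (the `k`-th power of a unit, `k ∈ ℤ`). -/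
def zpowPS (f : PowerSeries ℂ) : ℤ → PowerSeries ℂ
  | Int.ofNat n => f ^ n
  | Int.negSucc n => (f ^ (n + 1))⁻¹

/-- The additive shift `τ_c`: substitution of the power series `X·(1+cX)⁻¹`
(which has zero constant term) into a formal power series. -/
def tauSub (c : ℂ) (f : PowerSeries ℂ) : PowerSeries ℂ :=
  PowerSeries.mk fun m => ∑ n ∈ Finset.range (m + 1),
    coeff n f * coeff m ((X * (1 + C c * X)⁻¹ : PowerSeries ℂ) ^ n)

/-- The ambient monoid `ℤ × ℂ[[X]]` of the group `𝕄 = ℤ × 𝒯` (componentwise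
multiplication, the `ℤ`-component written additively): the pair `(k, m)` represents the
monic formal Laurent series `u^k·m(u⁻¹)`. -/
abbrev MM : Type := Multiplicative ℤ × PowerSeries ℂ

/-- The degree of an element of `𝕄`: `deg (k, m) = k`. -/
def Mdeg (x : MM) : ℤ := Multiplicative.toAdd x.1

/-- The inverse in `𝕄`: `(k, m)⁻¹ = (−k, m⁻¹)`. -/
def Minv (x : MM) : MM := (x.1⁻¹, x.2⁻¹)

/-- The additive shift `τ_c` on `𝕄`: `τ_c(k, m) = (k, (1+cX)^k · τ_c(m))`, where
`(1+cX)^k` is the `k`-th power (`k ∈ ℤ`) of the unit `1+cX` of `ℂ[[X]]`. -/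
def Mtau (c : ℂ) (x : MM) : MM :=
  (x.1, zpowPS (1 + C c * X) (Multiplicative.toAdd x.1) * tauSub c x.2)


section Helpers

/-- coeff 1 of a product. -/
lemma coeff1_mul (f g : PowerSeries ℂ) :
    coeff 1 (f * g) = constantCoeff f * coeff 1 g + coeff 1 f * constantCoeff g := by
  rw [coeff_mul, Finset.Nat.sum_antidiagonal_eq_sum_range_succ_mk]
  simp [Finset.sum_range_succ, coeff_zero_eq_constantCoeff]

lemma coeff1_inv (f : PowerSeries ℂ) (hf : constantCoeff f = 1) :
    coeff 1 f⁻¹ = -coeff 1 f := by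
  have h : f * f⁻¹ = 1 := PowerSeries.mul_inv_cancel f (by rw [hf]; exact one_ne_zero)
  have := congrArg (coeff 1) h
  rw [coeff1_mul, hf] at this
  have h0 : constantCoeff f⁻¹ = 1 := by rw [constantCoeff_inv, hf, inv_one]
  rw [h0] at this
  simp at this
  linear_combination this

lemma psInvUnique (f h : PowerSeries ℂ) (hf : constantCoeff f ≠ 0) (hh : f * h = 1) :
    h = f⁻¹ := by
  have h1 : f * f⁻¹ = 1 := PowerSeries.mul_inv_cancel f hf
  calc h = (f⁻¹ * f) * h := by rw [mul_comm f⁻¹ f, h1, one_mul]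
    _ = f⁻¹ * (f * h) := by ring
    _ = f⁻¹ := by rw [hh, mul_one]

variable (a : ℂ)

abbrev Fa : PowerSeries ℂ := 1 + C a * X

lemma constF : constantCoeff (Fa a) = 1 := by simp

lemma coeff1F : coeff 1 (Fa a) = a := by simp

def Ua : (PowerSeries ℂ)ˣ :=
  ⟨Fa a, (Fa a)⁻¹, PowerSeries.mul_inv_cancel _ (by simp),
    by rw [mul_comm]; exact PowerSeries.mul_inv_cancel _ (by simp)⟩

lemma zpow_eq_unit (k : ℤ) : zpowPS (Fa a) k = ((Ua a ^ k : (PowerSeries ℂ)ˣ) : PowerSeries ℂ) := by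
  cases k with
  | ofNat n => simp [zpowPS, zpow_natCast, Ua]
  | negSucc n =>
    rw [zpow_negSucc]
    show (Fa a ^ (n+1))⁻¹ = ((((Ua a) ^ (n+1))⁻¹ : (PowerSeries ℂ)ˣ) : PowerSeries ℂ)
    symm
    have hval : ((Ua a ^ (n+1) : (PowerSeries ℂ)ˣ) : PowerSeries ℂ) = Fa a ^ (n+1) := by
      simp [Ua]
    refine psInvUnique (Fa a ^ (n+1)) _ ?_ ?_
    · rw [map_pow, constF]; simp
    · rw [← hval, ← Units.val_mul, mul_inv_cancel, Units.val_one]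

lemma zpow_mul_zpow_neg (k : ℤ) : zpowPS (Fa a) k * zpowPS (Fa a) (-k) = 1 := by
  rw [zpow_eq_unit, zpow_eq_unit, ← Units.val_mul, ← zpow_add, add_neg_cancel]; rfl

lemma constF_zpow (k : ℤ) : constantCoeff (zpowPS (Fa a) k) = 1 := by
  cases k with
  | ofNat n => show constantCoeff ((Fa a) ^ n) = 1; rw [map_pow, constF, one_pow]
  | negSucc n =>
    show constantCoeff (((Fa a) ^ (n+1))⁻¹) = 1
    rw [constantCoeff_inv, map_pow, constF, one_pow, inv_one]

lemma coeff1F_pow (n : ℕ) : coeff 1 ((Fa a) ^ n) = n * a := by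
  induction n with
  | zero => simp
  | succ n ih =>
    rw [pow_succ, coeff1_mul, ih, map_pow, constF, coeff1F]
    push_cast; ring

lemma coeff1F_zpow (k : ℤ) : coeff 1 (zpowPS (Fa a) k) = k * a := by
  cases k with
  | ofNat n =>
    show coeff 1 ((Fa a) ^ n) = _
    rw [coeff1F_pow]; simp [Int.ofNat_eq_natCast]
  | negSucc n =>
    show coeff 1 (((Fa a) ^ (n+1))⁻¹) = _
    rw [coeff1_inv _ (by rw [map_pow, constF, one_pow]), coeff1F_pow]
    push_cast; ring

/-- Coefficients of powers of the substituted series. -/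
def Acoef (N j : ℕ) : ℂ := coeff N ((X * (Fa a)⁻¹ : PowerSeries ℂ) ^ j)

lemma coeff_tauSub (f : PowerSeries ℂ) (N : ℕ) :
    coeff N (tauSub a f) = ∑ n ∈ Finset.range (N + 1), coeff n f * Acoef a N n := by
  rw [tauSub, coeff_mk]; rfl

lemma coeff1Finv_pow (n : ℕ) : coeff 1 (((Fa a)⁻¹) ^ n) = -(n * a) := by
  induction n with
  | zero => simp
  | succ n ih =>
    rw [pow_succ, coeff1_mul, ih, map_pow, constantCoeff_inv, constF,
      coeff1_inv _ (constF a), coeff1F]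
    push_cast; simp; ring

lemma Acoef_diag (N : ℕ) : Acoef a N N = 1 := by
  rw [Acoef, mul_pow]
  have h := coeff_X_pow_mul ((((Fa a)⁻¹ : PowerSeries ℂ)) ^ N) N 0
  rw [zero_add] at h
  rw [h, coeff_zero_eq_constantCoeff, map_pow, constantCoeff_inv, constF]
  simp

lemma Acoef_sub_one (n : ℕ) : Acoef a (n + 1) n = -(n * a) := by
  rw [Acoef, mul_pow]
  have h := coeff_X_pow_mul ((((Fa a)⁻¹ : PowerSeries ℂ)) ^ n) n 1
  rw [add_comm 1 n] at h
  rw [h, coeff1Finv_pow]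

lemma tauSub_sub (f g : PowerSeries ℂ) : tauSub a (f - g) = tauSub a f - tauSub a g := by
  ext N
  rw [map_sub, coeff_tauSub, coeff_tauSub, coeff_tauSub, ← Finset.sum_sub_distrib]
  congr 1; ext n; rw [map_sub]; ring


lemma coeff_tau_peel (f : PowerSeries ℂ) (n : ℕ) :
    coeff (n+2) (tauSub a f) =
      (∑ j ∈ Finset.range (n+1), coeff j f * Acoef a (n+2) j)
        + coeff (n+1) f * (-(((n:ℂ)+1) * a)) + coeff (n+2) f := by
  rw [coeff_tauSub, Finset.sum_range_succ, Finset.sum_range_succ, Acoef_diag, mul_one]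
  have h := Acoef_sub_one a (n+1)
  push_cast at h
  rw [h]

lemma coeff_mul_peel (ρ f : PowerSeries ℂ) (n : ℕ)
    (hρ0 : constantCoeff ρ = 1) (hρ1 : coeff 1 ρ = 0) :
    coeff (n+2) (ρ * f) =
      (∑ j ∈ Finset.range (n+1), coeff (n+2-j) ρ * coeff j f) + coeff (n+2) f := by
  rw [coeff_mul, Finset.Nat.sum_antidiagonal_eq_sum_range_succ_mk,
    Finset.sum_range_succ', Finset.sum_range_succ']
  simp only [zero_add, Nat.sub_zero, Nat.succ_sub_one]
  rw [hρ1, zero_mul, add_zero, coeff_zero_eq_constantCoeff, hρ0, one_mul]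
  have hre : ∑ k ∈ Finset.range (n+1), coeff (k+1+1) ρ * coeff (n+2-(k+1+1)) f
      = ∑ j ∈ Finset.range (n+1), coeff (n+2-j) ρ * coeff j f := by
    rw [← Finset.sum_range_reflect (fun j => coeff (n+2-j) ρ * coeff j f) (n+1)]
    refine Finset.sum_congr rfl fun k hk => ?_
    have hk' := Finset.mem_range.mp hk
    have e1 : n + 2 - (n + 1 - 1 - k) = k + 1 + 1 := by omega
    have e2 : n + 1 - 1 - k = n + 2 - (k + 1 + 1) := by omega
    rw [e1, e2]
  rw [hre]

/-- Uniqueness: homogeneous solutions with zero constant term vanish. -/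
lemma tau_rho_unique (ha : a ≠ 0) (ρ d : PowerSeries ℂ)
    (hρ0 : constantCoeff ρ = 1) (hρ1 : coeff 1 ρ = 0)
    (hd0 : constantCoeff d = 0) (heq : tauSub a d = ρ * d) : d = 0 := by
  have key : ∀ n, coeff n d = 0 := by
    intro n
    induction n using Nat.strong_induction_on with
    | _ n IH =>
      match n with
      | 0 => rwa [coeff_zero_eq_constantCoeff]
      | (n+1) =>
        have hE := congrArg (coeff (n + 2)) heq
        rw [coeff_tau_peel, coeff_mul_peel ρ d n hρ0 hρ1] at hE
        have hS : ∑ j ∈ Finset.range (n + 1), coeff j d * Acoef a (n + 2) j = 0 :=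
          Finset.sum_eq_zero fun j hj => by
            rw [IH j (Finset.mem_range.mp hj), zero_mul]
        have hS2 : ∑ j ∈ Finset.range (n + 1), coeff (n + 2 - j) ρ * coeff j d = 0 :=
          Finset.sum_eq_zero fun j hj => by
            rw [IH j (Finset.mem_range.mp hj), mul_zero]
        rw [hS, hS2] at hE
        have h3 : coeff (n + 1) d * (((n : ℂ) + 1) * a) = 0 := by linear_combination -hE
        rcases mul_eq_zero.mp h3 with h | h
        · exact h
        · exact absurd h (mul_ne_zero (Nat.cast_add_one_ne_zero n) ha)
  ext n
  simp [key n]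

/-- Recursively defined coefficients of the solution. -/
def mcoef (a : ℂ) (ρ : PowerSeries ℂ) : ℕ → ℂ
  | 0 => 1
  | (n+1) => (-(((n : ℂ) + 1) * a))⁻¹ * ∑ j ∈ (Finset.range (n+1)).attach,
      (coeff (n + 2 - j.1) ρ - Acoef a (n+2) j.1) * mcoef a ρ j.1
  termination_by n => n
  decreasing_by exact Finset.mem_range.mp j.2

lemma mcoef_succ (ρ : PowerSeries ℂ) (n : ℕ) :
    mcoef a ρ (n+1) = (-(((n : ℂ) + 1) * a))⁻¹ * ∑ j ∈ Finset.range (n+1),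
      (coeff (n + 2 - j) ρ - Acoef a (n+2) j) * mcoef a ρ j := by
  rw [mcoef, ← Finset.sum_attach (Finset.range (n+1))
    (fun j => (coeff (n + 2 - j) ρ - Acoef a (n+2) j) * mcoef a ρ j)]

/-- Existence of a solution of `τ_a m = ρ m` with constant term 1. -/
lemma tau_rho_exists (ha : a ≠ 0) (ρ : PowerSeries ℂ)
    (hρ0 : constantCoeff ρ = 1) (hρ1 : coeff 1 ρ = 0) :
    ∃ m : PowerSeries ℂ, constantCoeff m = 1 ∧ tauSub a m = ρ * m := by
  set m : PowerSeries ℂ := PowerSeries.mk (mcoef a ρ) with hm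
  have hcm : ∀ j, coeff j m = mcoef a ρ j := fun j => coeff_mk j _
  have hm0 : constantCoeff m = 1 := by
    rw [← coeff_zero_eq_constantCoeff, hcm]; simp [mcoef]
  refine ⟨m, hm0, ?_⟩
  ext N
  match N with
  | 0 =>
    rw [coeff_tauSub, Finset.sum_range_one, Acoef_diag, mul_one,
      coeff_zero_eq_constantCoeff, map_mul, hρ0, one_mul]
  | 1 =>
    rw [coeff_tauSub, Finset.sum_range_succ, Finset.sum_range_one, Acoef_diag, mul_one,
      coeff1_mul, hρ0, hρ1, one_mul, zero_mul, add_zero]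
    have hA10 : Acoef a 1 0 = 0 := by simp [Acoef]
    rw [hA10, mul_zero, zero_add]
  | (n+2) =>
    rw [coeff_tau_peel, coeff_mul_peel ρ m n hρ0 hρ1]
    simp only [hcm]
    have hne : (-(((n : ℂ) + 1) * a)) ≠ 0 :=
      neg_ne_zero.mpr (mul_ne_zero (Nat.cast_add_one_ne_zero n) ha)
    have hmc' : mcoef a ρ (n+1) * (-(((n : ℂ) + 1) * a)) = ∑ j ∈ Finset.range (n+1),
        (coeff (n + 2 - j) ρ - Acoef a (n+2) j) * mcoef a ρ j := by
      rw [mcoef_succ, mul_comm, ← mul_assoc, mul_inv_cancel₀ hne, one_mul]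
    simp only [sub_mul] at hmc'
    rw [Finset.sum_sub_distrib] at hmc'
    have hgoal1 : ∑ j ∈ Finset.range (n+1), mcoef a ρ j * Acoef a (n+2) j
        = ∑ j ∈ Finset.range (n+1), Acoef a (n+2) j * mcoef a ρ j :=
      Finset.sum_congr rfl fun j _ => mul_comm _ _
    rw [hgoal1]
    linear_combination hmc'

lemma const_tauSub (f : PowerSeries ℂ) : constantCoeff (tauSub a f) = constantCoeff f := by
  rw [← coeff_zero_eq_constantCoeff, coeff_tauSub, Finset.sum_range_one, Acoef_diag, mul_one,
    coeff_zero_eq_constantCoeff]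

lemma Acoef_one_zero : Acoef a 1 0 = 0 := by simp [Acoef]

lemma coeff1_tauSub (f : PowerSeries ℂ) : coeff 1 (tauSub a f) = coeff 1 f := by
  rw [coeff_tauSub, Finset.sum_range_succ, Finset.sum_range_one, Acoef_diag, mul_one,
    Acoef_one_zero, mul_zero, zero_add]

end Helpers

lemma Meq_iff (a : ℂ) (lam : PowerSeries ℂ) (μ : MM) :
    Mtau a μ * Minv μ = ((1 : Multiplicative ℤ), lam) ↔
      zpowPS (1 + C a * X) (Multiplicative.toAdd μ.1) * tauSub a μ.2 * (μ.2)⁻¹ = lam := by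
  show (_ * _, _ * _) = _ ↔ _
  rw [Prod.mk.injEq]
  simp [Mtau, Minv, mul_assoc]

lemma deg_mul_a (a : ℂ) (lam : PowerSeries ℂ) (μ : MM) (hμ : constantCoeff μ.2 = 1)
    (heq : zpowPS (1 + C a * X) (Multiplicative.toAdd μ.1) * tauSub a μ.2 * (μ.2)⁻¹ = lam) :
    ((Multiplicative.toAdd μ.1 : ℤ) : ℂ) * a = coeff 1 lam := by
  set k : ℤ := Multiplicative.toAdd μ.1
  have h1 := congrArg (coeff 1) heq
  rw [coeff1_mul, coeff1_mul, map_mul, constF_zpow, const_tauSub, hμ, coeff1_tauSub,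
    coeff1F_zpow, constantCoeff_inv, hμ, inv_one, coeff1_inv _ hμ] at h1
  linear_combination h1

lemma solves_rho (a : ℂ) (lam : PowerSeries ℂ) (k : ℤ) (f : PowerSeries ℂ)
    (hf : constantCoeff f = 1)
    (heq : zpowPS (1 + C a * X) k * tauSub a f * f⁻¹ = lam) :
    tauSub a f = (lam * zpowPS (1 + C a * X) (-k)) * f := by
  have h2 : f * f⁻¹ = 1 := PowerSeries.mul_inv_cancel _ (by rw [hf]; exact one_ne_zero)
  have h3 : zpowPS (1 + C a * X) k * zpowPS (1 + C a * X) (-k) = 1 := zpow_mul_zpow_neg a k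
  calc tauSub a f
      = (zpowPS (1 + C a * X) k * zpowPS (1 + C a * X) (-k)) * ((f * f⁻¹) * tauSub a f) := by
        rw [h3, h2, one_mul, one_mul]
    _ = (zpowPS (1 + C a * X) k * tauSub a f * f⁻¹) * (zpowPS (1 + C a * X) (-k) * f) := by
        ring
    _ = lam * (zpowPS (1 + C a * X) (-k) * f) := by rw [heq]
    _ = (lam * zpowPS (1 + C a * X) (-k)) * f := by ring

lemma rho_const (a : ℂ) (lam : PowerSeries ℂ) (hlam : constantCoeff lam = 1) (k : ℤ) :
    constantCoeff (lam * zpowPS (1 + C a * X) (-k)) = 1 := by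
  rw [map_mul, hlam, constF_zpow, one_mul]

lemma rho_coeff1 (a : ℂ) (lam : PowerSeries ℂ) (k : ℤ) (hk : coeff 1 lam = (k : ℂ) * a)
    (hlam : constantCoeff lam = 1) :
    coeff 1 (lam * zpowPS (1 + C a * X) (-k)) = 0 := by
  rw [coeff1_mul, hlam, coeff1F_zpow, constF_zpow, hk]
  push_cast
  ring

/-- for `a ≠ 0` and `λ ∈ 𝒯` with `c₁` the coefficient of `X` in `λ`, the
difference equation `τ_a(μ)·μ⁻¹ = λ` has a solution `μ ∈ 𝕄` iff `c₁/a ∈ ℤ`; in that case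
the solution is unique and `deg μ = c₁/a`.  (The degree-zero subgroup `{0} × 𝒯` of `𝕄`
is identified with `𝒯`, so the right-hand side of the equation is `(0, λ)`.) -/
theorem difference_equation_solvable_iff
    (a : ℂ) (ha : a ≠ 0) (lam : PowerSeries ℂ) (hlam : constantCoeff lam = 1)
    (c1 : ℂ) (hc1 : c1 = coeff 1 lam) :
    ((∃ μ : MM, constantCoeff μ.2 = 1 ∧ Mtau a μ * Minv μ = (1, lam)) ↔
      ∃ n : ℤ, c1 / a = (n : ℂ)) ∧
    (∀ μ ν : MM, constantCoeff μ.2 = 1 → constantCoeff ν.2 = 1 →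
      Mtau a μ * Minv μ = (1, lam) → Mtau a ν * Minv ν = (1, lam) →
      μ = ν ∧ (Mdeg μ : ℂ) = c1 / a) := by
  constructor
  · constructor
    · rintro ⟨μ, hμ0, heq⟩
      rw [Meq_iff] at heq
      have hd := deg_mul_a a lam μ hμ0 heq
      refine ⟨Multiplicative.toAdd μ.1, ?_⟩
      rw [hc1, ← hd]
      field_simp
    · rintro ⟨n, hn⟩
      have hc : coeff 1 lam = (n : ℂ) * a := by
        rw [← hc1]
        field_simp at hn
        linear_combination hn
      obtain ⟨m, hm0, hmeq⟩ := tau_rho_exists a ha (lam * zpowPS (1 + C a * X) (-n))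
        (rho_const a lam hlam n) (rho_coeff1 a lam n hc hlam)
      refine ⟨(Multiplicative.ofAdd n, m), hm0, ?_⟩
      rw [Meq_iff]
      have htd : Multiplicative.toAdd ((Multiplicative.ofAdd n, m) : MM).1 = n := rfl
      rw [htd]
      show zpowPS (1 + C a * X) n * tauSub a m * m⁻¹ = lam
      have h2 : m * m⁻¹ = 1 := PowerSeries.mul_inv_cancel _ (by rw [hm0]; exact one_ne_zero)
      have h3 : zpowPS (1 + C a * X) n * zpowPS (1 + C a * X) (-n) = 1 :=
        zpow_mul_zpow_neg a n
      calc zpowPS (1 + C a * X) n * tauSub a m * m⁻¹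
          = zpowPS (1 + C a * X) n * (lam * zpowPS (1 + C a * X) (-n) * m) * m⁻¹ := by
            rw [hmeq]
        _ = (zpowPS (1 + C a * X) n * zpowPS (1 + C a * X) (-n)) * lam * (m * m⁻¹) := by
            ring
        _ = lam := by rw [h2, h3, one_mul, mul_one]
  · intro μ ν hμ0 hν0 e1 e2
    rw [Meq_iff] at e1 e2
    have hd1 := deg_mul_a a lam μ hμ0 e1
    have hd2 := deg_mul_a a lam ν hν0 e2
    have hdeg : (Mdeg μ : ℂ) = c1 / a := by
      rw [Mdeg, hc1, ← hd1]
      field_simp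
    have hkl : Multiplicative.toAdd μ.1 = Multiplicative.toAdd ν.1 := by
      have : ((Multiplicative.toAdd μ.1 : ℤ) : ℂ) = ((Multiplicative.toAdd ν.1 : ℤ) : ℂ) :=
        mul_right_cancel₀ ha (by rw [hd1, hd2])
      exact_mod_cast this
    have h1 : μ.1 = ν.1 := Multiplicative.toAdd.injective hkl
    set k : ℤ := Multiplicative.toAdd μ.1 with hk
    have hr1 := solves_rho a lam k μ.2 hμ0 e1
    have hr2 := solves_rho a lam k ν.2 hν0 (by rw [hkl] at e1 ⊢; exact e2)
    have hρ0 := rho_const a lam hlam k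
    have hρ1 := rho_coeff1 a lam k (by rw [← hd1]) hlam
    have hdz : μ.2 - ν.2 = 0 := by
      apply tau_rho_unique a ha (lam * zpowPS (1 + C a * X) (-k)) _ hρ0 hρ1
      · rw [map_sub, hμ0, hν0, sub_self]
      · rw [tauSub_sub, hr1, hr2, mul_sub]
    exact ⟨Prod.ext h1 (sub_eq_zero.mp hdz), hdeg⟩
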